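/- arXiv:0801.3365 — 2 statements merged into one kernel-verified Lean document; each statement's English description precedes it below -/
import Mathlib

section
/- Localization on paths: under the same hypotheses, for any path p and any diamond o causally disjoint from both endpoints ∂₀p and ∂₁p, the cocycle value z(p) commutes with every element of R(o). -/
/-- A 1-simplex of a poset `K`: two faces and a support dominating both. -/
structure OneSimplex (K : Type*) [PartialOrder K] where
  face0 : K
  face1 : K
  supp : K
  le0 : face0 ≤ supp
  le1 : face1 ≤ supp

/-- The reverse of a 1-simplex: same support, exchanged faces. -/
def OneSimplex.rev {K : Type*} [PartialOrder K] (b : OneSimplex K) : OneSimplex K :=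
  ⟨b.face1, b.face0, b.supp, b.le1, b.le0⟩

/-- The degenerate 1-simplex `σ₀ a` at a 0-simplex `a`. -/
def OneSimplex.degenerate {K : Type*} [PartialOrder K] (a : K) : OneSimplex K :=
  ⟨a, a, a, le_refl a, le_refl a⟩

/-- A 2-simplex of a poset `K`, presented by its three vertices, the supports of its
three faces, and its own support, with all required order relations. Its faces
`∂₀c, ∂₁c, ∂₂c` satisfy the simplicial identities by construction. -/
structure TwoSimplex (K : Type*) [PartialOrder K] where
  vstart : K
  vmid : K
  vend : K
  s0 : K
  s1 : K
  s2 : K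
  supp : K
  hs0 : s0 ≤ supp
  hs1 : s1 ≤ supp
  hs2 : s2 ≤ supp
  h0s : vmid ≤ s0
  h0e : vend ≤ s0
  h1s : vstart ≤ s1
  h1e : vend ≤ s1
  h2s : vstart ≤ s2
  h2e : vmid ≤ s2

/-- The face `∂₀c` (from `vmid` to `vend`). -/
def TwoSimplex.face0 {K : Type*} [PartialOrder K] (c : TwoSimplex K) : OneSimplex K :=
  ⟨c.vend, c.vmid, c.s0, c.h0e, c.h0s⟩

/-- The face `∂₁c` (from `vstart` to `vend`). -/
def TwoSimplex.face1 {K : Type*} [PartialOrder K] (c : TwoSimplex K) : OneSimplex K :=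
  ⟨c.vend, c.vstart, c.s1, c.h1e, c.h1s⟩

/-- The face `∂₂c` (from `vstart` to `vmid`). -/
def TwoSimplex.face2 {K : Type*} [PartialOrder K] (c : TwoSimplex K) : OneSimplex K :=
  ⟨c.vmid, c.vstart, c.s2, c.h2e, c.h2s⟩

/-- A path in the poset `K` from `x` to `y`: a nonempty composable string of
1-simplices, `∂₁` of the first being `x` and `∂₀` of the last being `y`. -/
inductive PPath (K : Type*) [PartialOrder K] : K → K → Type _
  | single (b : OneSimplex K) : PPath K b.face1 b.face0
  | cons (b : OneSimplex K) {x : K} (p : PPath K x b.face1) : PPath K x b.face0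

/-- Composition of paths: `q.comp p` first traverses `p`, then `q`. -/
def PPath.comp {K : Type*} [PartialOrder K] : ∀ {x y w : K}, PPath K y w → PPath K x y → PPath K x w
  | _, _, _, .single b, p => .cons b p
  | _, _, _, .cons b q, p => .cons b (q.comp p)

/-- The reverse of a path. -/
def PPath.rev {K : Type*} [PartialOrder K] : ∀ {x y : K}, PPath K x y → PPath K y x
  | _, _, .single b => .single b.rev
  | _, _, .cons b p => PPath.comp p.rev (.single b.rev)

/-- Multiplicative extension of a function on 1-simplices to paths:
`z(bₙ * ⋯ * b₁) = z(bₙ) ⋯ z(b₁)`. -/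
def PPath.eval {K : Type*} [PartialOrder K] {M : Type*} [Monoid M]
    (z : OneSimplex K → M) : ∀ {x y : K}, PPath K x y → M
  | _, _, .single b => z b
  | _, _, .cons b p => z b * p.eval z

/-- The support of the path is causally disjoint from `o` (every 1-simplex of the path
has support `⊥ o`). -/
def PPath.suppDisjoint {K : Type*} [PartialOrder K] (perp : K → K → Prop) (o : K) :
    ∀ {x y : K}, PPath K x y → Prop
  | _, _, .single b => perp b.supp o
  | _, _, .cons b p => perp b.supp o ∧ p.suppDisjoint perp o

/-- Homotopy of paths with the same endpoints: the equivalence relation generated by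
elementary deformations (replacing `∂₁c` by `∂₀c * ∂₂c` for a 2-simplex `c`), compatible
with composition. -/
inductive PHomotopic {K : Type*} [PartialOrder K] : ∀ {x y : K}, PPath K x y → PPath K x y → Prop
  | refl {x y : K} (p : PPath K x y) : PHomotopic p p
  | symm {x y : K} {p q : PPath K x y} : PHomotopic p q → PHomotopic q p
  | trans {x y : K} {p q r : PPath K x y} : PHomotopic p q → PHomotopic q r → PHomotopic p r
  | deform (c : TwoSimplex K) :
      PHomotopic (.single c.face1) ((PPath.single c.face0).comp (.single c.face2))
  | comp_congr {x y w : K} {q q' : PPath K y w} {p p' : PPath K x y} :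
      PHomotopic q q' → PHomotopic p p' → PHomotopic (q.comp p) (q'.comp p')


/-! Choose a path `q` from `x` to `y` whose support avoids `o`. The loop `q⁻¹ * p` at `x`
deforms into a loop `ℓ` avoiding `o`, and the cocycle identity makes `z` homotopy invariant,
so `z(q⁻¹) z(p) = z(ℓ)`. By Haag duality every `z(b)` with `b.supp ⊥ o` commutes with `R o`,
hence so do `z(ℓ)` and `z(q⁻¹)`; since `z(q⁻¹)` is unitary, `z(p)` commutes with `R o` too. -/

theorem Commute.of_mul_left_of_isUnit {M : Type*} [Monoid M] {u a b : M} (hu : IsUnit u)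
    (hua : Commute u a) (h : Commute (u * b) a) : Commute b a := by
  obtain ⟨u, rfl⟩ := hu
  simpa [← mul_assoc] using hua.units_inv_left.mul_left h

theorem commute_of_mem_of_perp {K : Type*} {H : Type*} [NormedAddCommGroup H]
    [InnerProductSpace ℂ H] [CompleteSpace H] {perp : K → K → Prop} {R : K → VonNeumannAlgebra H}
    {o b : K} (hlocal : (R o : Set (H →L[ℂ] H)) ⊆
      ⋂ (b : K), ⋂ (_ : perp b o), ((R b).commutant : Set (H →L[ℂ] H)))
    (hb : perp b o) {A B : H →L[ℂ] H} (hB : B ∈ R b) (hA : A ∈ R o) : Commute B A :=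
  VonNeumannAlgebra.mem_commutant_iff.1 (Set.mem_iInter₂.1 (hlocal hA) b hb) B hB

namespace PPath

variable {K : Type*} [PartialOrder K] {M : Type*} [Monoid M]

theorem eval_comp (z : OneSimplex K → M) :
    ∀ {x y w : K} (q : PPath K y w) (p : PPath K x y),
      (q.comp p).eval z = q.eval z * p.eval z
  | _, _, _, .single _, _ => rfl
  | _, _, _, .cons b q, p => by
    change z b * (q.comp p).eval z = z b * q.eval z * p.eval z
    rw [eval_comp z q p, mul_assoc]

theorem isUnit_eval {z : OneSimplex K → M} (hz : ∀ b, IsUnit (z b)) :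
    ∀ {x y : K} (p : PPath K x y), IsUnit (p.eval z)
  | _, _, .single b => hz b
  | _, _, .cons b p => (hz b).mul (isUnit_eval hz p)

theorem commute_eval_of_suppDisjoint {perp : K → K → Prop} {o : K} {z : OneSimplex K → M} {a : M}
    (hz : ∀ b : OneSimplex K, perp b.supp o → Commute (z b) a) :
    ∀ {x y : K} {p : PPath K x y}, p.suppDisjoint perp o → Commute (p.eval z) a
  | _, _, .single b, hp => hz b hp
  | _, _, .cons b _, hp => (hz b hp.1).mul_left (commute_eval_of_suppDisjoint hz hp.2)

theorem suppDisjoint_comp {perp : K → K → Prop} {o : K} :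
    ∀ {x y w : K} {q : PPath K y w} {p : PPath K x y},
      q.suppDisjoint perp o → p.suppDisjoint perp o → (q.comp p).suppDisjoint perp o
  | _, _, _, .single _, _, hq, hp => ⟨hq, hp⟩
  | _, _, _, .cons _ _, _, hq, hp => ⟨hq.1, suppDisjoint_comp hq.2 hp⟩

theorem suppDisjoint_rev {perp : K → K → Prop} {o : K} :
    ∀ {x y : K} {p : PPath K x y}, p.suppDisjoint perp o → p.rev.suppDisjoint perp o
  | _, _, .single _, hp => hp
  | _, _, .cons _ _, hp => suppDisjoint_comp (suppDisjoint_rev hp.2) hp.1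

end PPath

theorem PHomotopic.eval_eq {K : Type*} [PartialOrder K] {M : Type*} [Monoid M]
    {z : OneSimplex K → M} (hzc : ∀ c : TwoSimplex K, z c.face0 * z c.face2 = z c.face1)
    {x y : K} {p q : PPath K x y} (h : PHomotopic p q) : p.eval z = q.eval z := by
  induction h with
  | refl => rfl
  | symm _ ih => exact ih.symm
  | trans _ _ ih₁ ih₂ => exact ih₁.trans ih₂
  | deform c => exact (hzc c).symm
  | comp_congr _ _ ih₁ ih₂ => rw [PPath.eval_comp, PPath.eval_comp, ih₁, ih₂]

theorem cocycle_path_localization_general {K : Type*} [PartialOrder K]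
    {H : Type*} [NormedAddCommGroup H] [InnerProductSpace ℂ H] [CompleteSpace H]
    (perp : K → K → Prop)
    (R : K → VonNeumannAlgebra H)
    (hhaag : ∀ a : K, (R a : Set (H →L[ℂ] H)) =
        ⋂ (b : K), ⋂ (_ : perp b a), ((R b).commutant : Set (H →L[ℂ] H)))
    (hccconn : ∀ (o x y : K), perp x o → perp y o →
        ∃ q : PPath K x y, q.suppDisjoint perp o)
    (hdef : ∀ (a o : K), perp a o → ∀ ℓ : PPath K a a,
        ∃ ℓ' : PPath K a a, PHomotopic ℓ ℓ' ∧ ℓ'.suppDisjoint perp o)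
    (z : OneSimplex K → (H →L[ℂ] H))
    (hzu : ∀ b : OneSimplex K, z b ∈ unitary (H →L[ℂ] H))
    (hzc : ∀ c : TwoSimplex K, z c.face0 * z c.face2 = z c.face1)
    (hloc : ∀ b : OneSimplex K, z b ∈ R b.supp) :
    ∀ (x y : K) (p : PPath K x y) (o : K), perp x o → perp y o →
      ∀ A ∈ R o, Commute (p.eval z) A := by
  intro x y p o hx hy A hA
  have hz : ∀ b : OneSimplex K, perp b.supp o → Commute (z b) A := fun b hb =>
    commute_of_mem_of_perp (hhaag o).le hb (hloc b) hA
  obtain ⟨q, hq⟩ := hccconn o x y hx hy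
  obtain ⟨ℓ, hqpℓ, hℓ⟩ := hdef x o hx (q.rev.comp p)
  have hloop : Commute (q.rev.eval z * p.eval z) A := by
    rw [← PPath.eval_comp, hqpℓ.eval_eq hzc]
    exact PPath.commute_eval_of_suppDisjoint hz hℓ
  have hq_unit : IsUnit (q.rev.eval z) :=
    PPath.isUnit_eval (fun b => Unitary.isUnit_coe (U := ⟨z b, hzu b⟩)) q.rev
  exact .of_mul_left_of_isUnit hq_unit
    (PPath.commute_eval_of_suppDisjoint hz (PPath.suppDisjoint_rev hq)) hloop

theorem cocycle_path_localization {K : Type*} [PartialOrder K]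
    {H : Type*} [NormedAddCommGroup H] [InnerProductSpace ℂ H] [CompleteSpace H]
    (perp : K → K → Prop)
    (hsymm : ∀ x y : K, perp x y → perp y x)
    (R : K → VonNeumannAlgebra H)
    (hiso : ∀ ⦃a b : K⦄, a ≤ b → (R a : Set (H →L[ℂ] H)) ⊆ (R b : Set (H →L[ℂ] H)))
    (hhaag : ∀ a : K, (R a : Set (H →L[ℂ] H)) =
        ⋂ (b : K), ⋂ (_ : perp b a), ((R b).commutant : Set (H →L[ℂ] H)))
    (hccconn : ∀ (o x y : K), perp x o → perp y o →
        ∃ q : PPath K x y, q.suppDisjoint perp o)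
    (hdef : ∀ (a o : K), perp a o → ∀ ℓ : PPath K a a,
        ∃ ℓ' : PPath K a a, PHomotopic ℓ ℓ' ∧ ℓ'.suppDisjoint perp o)
    (z : OneSimplex K → (H →L[ℂ] H))
    (hzu : ∀ b : OneSimplex K, z b ∈ unitary (H →L[ℂ] H))
    (hzc : ∀ c : TwoSimplex K, z c.face0 * z c.face2 = z c.face1)
    (hloc : ∀ b : OneSimplex K, z b ∈ R b.supp) :
    ∀ (x y : K) (p : PPath K x y) (o : K), perp x o → perp y o →
      ∀ A ∈ R o, Commute (p.eval z) A :=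
  cocycle_path_localization_general perp R hhaag hccconn hdef z hzu hzc hloc
end

section
/- Embedding of the loop algebra into self-intertwiners of the charge component: for a locally-valued 1-cocycle z with path-frame P_o, define ρ_a(X) := z(p_{(a,o)}) X z(p_{(a,o)})* for X in the von Neumann algebra R^z(o) generated by {z(ℓ) : ℓ loop at o}. Then ρ, as the family (ρ_a), is an injective *-morphism into the self-intertwiners of the charge component ẑ: ρ_{∂₀b}(X)·ẑ(b) = ẑ(b)·ρ_{∂₁b}(X) for all 1-simplices b and X ∈ R^z(o). Moreover, if X lies in the centre of R^z(o), then ρ_{∂₀b}(X)·z(b) = z(b)·ρ_{∂₁b}(X), i.e. ρ(X) is a self-intertwiner of z itself. -/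
/-- The charge component of a 1-cocycle with respect to a path-frame `P` with pole `o`:
`ẑ(b) := z(p_{(∂₀b,o)} * p̄_{(∂₁b,o)})`. -/
def chargeComp {K : Type*} [PartialOrder K] {M : Type*} [Monoid M] {o : K}
    (P : ∀ a : K, PPath K o a) (z : OneSimplex K → M) (b : OneSimplex K) : M :=
  ((P b.face0).comp (P b.face1).rev).eval z

/-- The von Neumann algebra (double commutant) generated by the values of a 1-cocycle on
loops based at `o`. -/
def loopVN {K : Type*} [PartialOrder K]
    {H : Type*} [NormedAddCommGroup H] [InnerProductSpace ℂ H] [CompleteSpace H]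
    (o : K) (z : OneSimplex K → (H →L[ℂ] H)) : Set (H →L[ℂ] H) :=
  Set.centralizer (Set.centralizer {T : H →L[ℂ] H | ∃ ℓ : PPath K o o, ℓ.eval z = T})

/-!
Each `ρ_a` is conjugation by the unitary `z(p_{(a,o)})`, hence a ⋆-automorphism, injective
already at `a = o`. The cocycle identity on degenerate 2-simplices gives `z(p̄) = z(p)*`, so
`ẑ(b) = z(p_{(∂₀b,o)}) z(p_{(∂₁b,o)})*`, which any family of such conjugations intertwines.
For `z` itself, `ρ_{∂₀b}(X) z(b) = z(b) ρ_{∂₁b}(X)` says exactly that `X` commutes with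
`z(p̄_{(∂₀b,o)} * b * p_{(∂₁b,o)})`, the value of a loop at `o`; this lies in `R^z(o)`, so central
`X` commute with it.
-/

section Cocycle

variable {K : Type*} [PartialOrder K] {M : Type*} [Monoid M]

theorem PPath.eval_comp_s18 (z : OneSimplex K → M) :
    ∀ {x y w : K} (q : PPath K y w) (p : PPath K x y),
      (q.comp p).eval z = q.eval z * p.eval z
  | _, _, _, .single _, _ => rfl
  | _, _, _, .cons b q, p => by
      change z b * (q.comp p).eval z = z b * q.eval z * p.eval z
      rw [PPath.eval_comp_s18 z q p, mul_assoc]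

variable [StarMul M] {z : OneSimplex K → M}

theorem PPath.eval_mem_unitary (hzu : ∀ b, z b ∈ unitary M) :
    ∀ {x y : K} (p : PPath K x y), p.eval z ∈ unitary M
  | _, _, .single b => hzu b
  | _, _, .cons b p => mul_mem (hzu b) (p.eval_mem_unitary hzu)

section

variable (hzu : ∀ b, z b ∈ unitary M)
  (hzc : ∀ c : TwoSimplex K, z c.face0 * z c.face2 = z c.face1)
include hzu hzc

/-- The cocycle identity on the 2-simplex with all vertices `a` makes this value an idempotent
unitary. -/
theorem cocycle_mk_self_eq_one (a s : K) (h : a ≤ s) : z ⟨a, a, s, h, h⟩ = 1 := by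
  set u : OneSimplex K := ⟨a, a, s, h, h⟩
  have hidem : z u * z u = z u :=
    hzc ⟨a, a, a, s, s, s, s, le_rfl, le_rfl, le_rfl, h, h, h, h, h, h⟩
  have hstar : star (z u) * z u = 1 := Unitary.star_mul_self_of_mem (hzu u)
  calc z u = star (z u) * (z u * z u) := by rw [← mul_assoc, hstar, one_mul]
    _ = 1 := by rw [hidem, hstar]

theorem cocycle_rev (b : OneSimplex K) : z b.rev = star (z b) := by
  have hinv : z b * z b.rev = 1 := by
    rw [← cocycle_mk_self_eq_one hzu hzc b.face0 b.supp b.le0]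
    exact hzc ⟨b.face0, b.face1, b.face0, b.supp, b.supp, b.supp, b.supp,
      le_rfl, le_rfl, le_rfl, b.le1, b.le0, b.le0, b.le0, b.le0, b.le1⟩
  calc z b.rev = star (z b) * (z b * z b.rev) := by
        rw [← mul_assoc, Unitary.star_mul_self_of_mem (hzu b), one_mul]
    _ = star (z b) := by rw [hinv, mul_one]

theorem PPath.eval_rev : ∀ {x y : K} (p : PPath K x y), p.rev.eval z = star (p.eval z)
  | _, _, .single b => cocycle_rev hzu hzc b
  | _, _, .cons b p => by
      change (PPath.comp p.rev (.single b.rev)).eval z = star (z b * p.eval z)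
      refine (PPath.eval_comp_s18 z p.rev (.single b.rev)).trans ?_
      rw [p.eval_rev, star_mul]
      exact congrArg _ (cocycle_rev hzu hzc b)

theorem chargeComp_eq {o : K} (P : ∀ a : K, PPath K o a) (b : OneSimplex K) :
    chargeComp P z b = (P b.face0).eval z * star ((P b.face1).eval z) := by
  rw [chargeComp, PPath.eval_comp_s18, PPath.eval_rev hzu hzc]

end

end Cocycle

section Conjugation

variable {M : Type*} [Monoid M] [StarMul M]

theorem conj_mul_mul_star_eq_mul_star_mul_conj {u₀ u₁ : M} (h₀ : star u₀ * u₀ = 1)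
    (h₁ : star u₁ * u₁ = 1) (X : M) :
    u₀ * X * star u₀ * (u₀ * star u₁) = u₀ * star u₁ * (u₁ * X * star u₁) := by
  calc u₀ * X * star u₀ * (u₀ * star u₁) = u₀ * X * star u₁ := by
        simp only [mul_assoc]; rw [← mul_assoc (star u₀), h₀, one_mul]
    _ = u₀ * star u₁ * (u₁ * X * star u₁) := by
        simp only [mul_assoc]; rw [← mul_assoc (star u₁), h₁, one_mul]

theorem conj_mul_eq_mul_conj_of_commute {u₀ u₁ w X : M} (h₀ : u₀ * star u₀ = 1)
    (h₁ : u₁ * star u₁ = 1) (hX : Commute X (star u₀ * w * u₁)) :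
    u₀ * X * star u₀ * w = w * (u₁ * X * star u₁) :=
  calc u₀ * X * star u₀ * w = u₀ * X * (star u₀ * w * u₁) * star u₁ := by
        simp only [mul_assoc, h₁, mul_one]
    _ = u₀ * (star u₀ * w * u₁) * X * star u₁ := by
        rw [mul_assoc u₀ X, hX.eq, ← mul_assoc]
    _ = w * (u₁ * X * star u₁) := by
        simp only [← mul_assoc, h₀, one_mul]

end Conjugation

theorem star_eval_mul_mul_eval_mem_loopVN {K : Type*} [PartialOrder K]
    {H : Type*} [NormedAddCommGroup H] [InnerProductSpace ℂ H] [CompleteSpace H]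
    {o : K} {z : OneSimplex K → (H →L[ℂ] H)} (hzu : ∀ b, z b ∈ unitary (H →L[ℂ] H))
    (hzc : ∀ c : TwoSimplex K, z c.face0 * z c.face2 = z c.face1) (b : OneSimplex K)
    (p : PPath K o b.face0) (q : PPath K o b.face1) :
    star (p.eval z) * z b * q.eval z ∈ loopVN o z := by
  refine Set.subset_centralizer_centralizer ⟨p.rev.comp (.cons b q), ?_⟩
  rw [PPath.eval_comp_s18, PPath.eval_rev hzu hzc, mul_assoc]
  rfl

theorem loop_algebra_embedding_general {K : Type*} [PartialOrder K]
    {H : Type*} [NormedAddCommGroup H] [InnerProductSpace ℂ H] [CompleteSpace H]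
    (o : K) (P : ∀ a : K, PPath K o a)
    (z : OneSimplex K → (H →L[ℂ] H))
    (hzu : ∀ b : OneSimplex K, z b ∈ unitary (H →L[ℂ] H))
    (hzc : ∀ c : TwoSimplex K, z c.face0 * z c.face2 = z c.face1) :
    (∀ (a : K) (X Y : H →L[ℂ] H),
        (P a).eval z * (X * Y) * star ((P a).eval z) =
          ((P a).eval z * X * star ((P a).eval z)) *
            ((P a).eval z * Y * star ((P a).eval z))) ∧
    (∀ (a : K) (X : H →L[ℂ] H),
        (P a).eval z * star X * star ((P a).eval z) =
          star ((P a).eval z * X * star ((P a).eval z))) ∧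
    (∀ X Y : H →L[ℂ] H,
        (∀ a : K, (P a).eval z * X * star ((P a).eval z) =
          (P a).eval z * Y * star ((P a).eval z)) → X = Y) ∧
    (∀ X ∈ loopVN o z, ∀ b : OneSimplex K,
        ((P b.face0).eval z * X * star ((P b.face0).eval z)) * chargeComp P z b =
          chargeComp P z b * ((P b.face1).eval z * X * star ((P b.face1).eval z))) ∧
    (∀ X ∈ loopVN o z, (∀ Y ∈ loopVN o z, Commute X Y) →
        ∀ b : OneSimplex K,
          ((P b.face0).eval z * X * star ((P b.face0).eval z)) * z b =
            z b * ((P b.face1).eval z * X * star ((P b.face1).eval z))) := by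
  have hu (a : K) : (P a).eval z ∈ unitary (H →L[ℂ] H) := (P a).eval_mem_unitary hzu
  let ρ (a : K) := Unitary.conjStarAlgAut ℂ (H →L[ℂ] H) ⟨(P a).eval z, hu a⟩
  refine ⟨fun a => map_mul (ρ a), fun a => map_star (ρ a), fun X Y h => (ρ o).injective (h o),
    fun X _ b => ?_, fun X _ hX b => ?_⟩
  · rw [chargeComp_eq hzu hzc]
    exact conj_mul_mul_star_eq_mul_star_mul_conj (Unitary.star_mul_self_of_mem (hu _))
      (Unitary.star_mul_self_of_mem (hu _)) X
  · exact conj_mul_eq_mul_conj_of_commute (Unitary.mul_star_self_of_mem (hu _))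
      (Unitary.mul_star_self_of_mem (hu _))
      (hX _ (star_eval_mul_mul_eval_mem_loopVN hzu hzc b (P b.face0) (P b.face1)))

theorem loop_algebra_embedding {K : Type*} [PartialOrder K]
    {H : Type*} [NormedAddCommGroup H] [InnerProductSpace ℂ H] [CompleteSpace H]
    (o : K) (P : ∀ a : K, PPath K o a)
    (hP : PHomotopic (P o) (PPath.single (OneSimplex.degenerate o)))
    (z : OneSimplex K → (H →L[ℂ] H))
    (hzu : ∀ b : OneSimplex K, z b ∈ unitary (H →L[ℂ] H))
    (hzc : ∀ c : TwoSimplex K, z c.face0 * z c.face2 = z c.face1) :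
    (∀ (a : K) (X Y : H →L[ℂ] H),
        (P a).eval z * (X * Y) * star ((P a).eval z) =
          ((P a).eval z * X * star ((P a).eval z)) *
            ((P a).eval z * Y * star ((P a).eval z))) ∧
    (∀ (a : K) (X : H →L[ℂ] H),
        (P a).eval z * star X * star ((P a).eval z) =
          star ((P a).eval z * X * star ((P a).eval z))) ∧
    (∀ X Y : H →L[ℂ] H,
        (∀ a : K, (P a).eval z * X * star ((P a).eval z) =
          (P a).eval z * Y * star ((P a).eval z)) → X = Y) ∧
    (∀ X ∈ loopVN o z, ∀ b : OneSimplex K,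
        ((P b.face0).eval z * X * star ((P b.face0).eval z)) * chargeComp P z b =
          chargeComp P z b * ((P b.face1).eval z * X * star ((P b.face1).eval z))) ∧
    (∀ X ∈ loopVN o z, (∀ Y ∈ loopVN o z, Commute X Y) →
        ∀ b : OneSimplex K,
          ((P b.face0).eval z * X * star ((P b.face0).eval z)) * z b =
            z b * ((P b.face1).eval z * X * star ((P b.face1).eval z))) :=
  loop_algebra_embedding_general o P z hzu hzc
end
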